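/- arXiv:2506.16487 — 3 statements merged into one kernel-verified Lean document; each statement's English description precedes it below -/
import Mathlib

section
/- Let f : ⊕_{n ∈ ℕ₊} ℂ → ⊕_{m ∈ ℕ₊} ℂ be a linear map with f(e_i) ≠ 0 for all i, and let β(f) = ν̃ ∘ f̂, where f̂(e_i) = f(e_i) ⊗ e_i and ν̃(e_i ⊗ e_j) = e_{ν(i,j)} for the antidiagonal pairing bijection ν. Then β(f) is injective; i.e. the columns of the matrix β(f) are linearly independent. -/
open scoped TensorProduct

noncomputable section

/-- The antidiagonal pairing bijection ν(i,j) = (i+j-1)(i+j-2)/2 + j on ℕ₊. -/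
def nu (p : ℕ+ × ℕ+) : ℕ+ :=
  ⟨((p.1 : ℕ) + (p.2 : ℕ) - 1) * ((p.1 : ℕ) + (p.2 : ℕ) - 2) / 2 + (p.2 : ℕ),
    Nat.lt_of_lt_of_le p.2.2 (Nat.le_add_left _ _)⟩

/-- Standard basis vector e_i of ⊕_{ℕ₊} ℂ. -/
def e (i : ℕ+) : ℕ+ →₀ ℂ := Finsupp.single i 1

/-- The linear map φ with φ(e_i ⊗ e_j) = e_i. -/
def phiT : ((ℕ+ →₀ ℂ) ⊗[ℂ] (ℕ+ →₀ ℂ)) →ₗ[ℂ] (ℕ+ →₀ ℂ) :=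
  Finsupp.lmapDomain ℂ ℂ Prod.fst ∘ₗ (finsuppTensorFinsupp' ℂ ℕ+ ℕ+).toLinearMap

/-- The linear map ν̃ with ν̃(e_i ⊗ e_j) = e_{ν(i,j)}. -/
def nuT : ((ℕ+ →₀ ℂ) ⊗[ℂ] (ℕ+ →₀ ℂ)) →ₗ[ℂ] (ℕ+ →₀ ℂ) :=
  Finsupp.lmapDomain ℂ ℂ (fun p => nu p) ∘ₗ (finsuppTensorFinsupp' ℂ ℕ+ ℕ+).toLinearMap

/-- The linear map f̂ with f̂(e_i) = f(e_i) ⊗ e_i. -/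
def fhat (f : (ℕ+ →₀ ℂ) →ₗ[ℂ] (ℕ+ →₀ ℂ)) :
    (ℕ+ →₀ ℂ) →ₗ[ℂ] ((ℕ+ →₀ ℂ) ⊗[ℂ] (ℕ+ →₀ ℂ)) :=
  Finsupp.lsum ℂ fun i => LinearMap.toSpanSingleton ℂ _ (f (e i) ⊗ₜ[ℂ] e i)

/-- β(f) = ν̃ ∘ f̂, i.e. β(f)(e_i) = Σ_k f_{ki} e_{ν(k,i)}. -/
def beta (f : (ℕ+ →₀ ℂ) →ₗ[ℂ] (ℕ+ →₀ ℂ)) : (ℕ+ →₀ ℂ) →ₗ[ℂ] (ℕ+ →₀ ℂ) :=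
  nuT ∘ₗ fhat f


private def T' (n : ℕ) : ℕ := (n-1)*(n-2)/2

private lemma T'_mono : Monotone T' := by
  intro a b h
  exact Nat.div_le_div_right (Nat.mul_le_mul (by omega) (by omega))

private lemma T'_succ (n : ℕ) (h : 2 ≤ n) : T' (n+1) = T' n + (n-1) := by
  obtain ⟨m, rfl⟩ : ∃ m, n = m + 2 := ⟨n - 2, by omega⟩
  show (m+2)*(m+1)/2 = (m+1)*m/2 + (m+1)
  rw [show (m+2)*(m+1) = (m+1)*m + (m+1)*2 by ring, Nat.add_mul_div_right _ _ (by norm_num)]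

private lemma T'_key (n₁ n₂ j₁ j₂ : ℕ) (h1 : 2 ≤ n₁) (hj1' : j₁ ≤ n₁ - 1)
    (hj2 : 1 ≤ j₂) (hlt : n₁ < n₂) : T' n₁ + j₁ < T' n₂ + j₂ := by
  have : T' n₁ + j₁ ≤ T' (n₁ + 1) := by rw [T'_succ n₁ h1]; omega
  have h2 : T' (n₁+1) ≤ T' n₂ := T'_mono hlt
  omega

lemma nu_injective : Function.Injective nu := by
  rintro ⟨i₁, j₁⟩ ⟨i₂, j₂⟩ h
  have h' : ((i₁:ℕ) + j₁ - 1) * ((i₁:ℕ) + j₁ - 2) / 2 + (j₁:ℕ)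
      = ((i₂:ℕ) + j₂ - 1) * ((i₂:ℕ) + j₂ - 2) / 2 + (j₂:ℕ) := congrArg Subtype.val h
  have h1 : 1 ≤ (i₁:ℕ) := i₁.2
  have h2 : 1 ≤ (j₁:ℕ) := j₁.2
  have h3 : 1 ≤ (i₂:ℕ) := i₂.2
  have h4 : 1 ≤ (j₂:ℕ) := j₂.2
  change T' ((i₁:ℕ)+j₁) + (j₁:ℕ) = T' ((i₂:ℕ)+j₂) + (j₂:ℕ) at h'
  have hn : (i₁:ℕ) + j₁ = (i₂:ℕ) + j₂ := by
    rcases lt_trichotomy ((i₁:ℕ)+j₁) ((i₂:ℕ)+j₂) with hl | he | hl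
    · exact absurd h' (T'_key _ _ _ _ (by omega) (by omega) h4 hl).ne
    · exact he
    · exact absurd h'.symm (T'_key _ _ _ _ (by omega) (by omega) h2 hl).ne
  rw [hn] at h'
  have hj : (j₁:ℕ) = j₂ := by omega
  have hi : (i₁:ℕ) = i₂ := by omega
  simp [Prod.ext_iff, ← PNat.coe_inj, hi, hj]

lemma inner_injective (f : (ℕ+ →₀ ℂ) →ₗ[ℂ] (ℕ+ →₀ ℂ)) (hf : ∀ i : ℕ+, f (e i) ≠ 0) :
    Function.Injective ⇑((finsuppTensorFinsupp' ℂ ℕ+ ℕ+).toLinearMap ∘ₗ fhat f) := by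
  set g := (finsuppTensorFinsupp' ℂ ℕ+ ℕ+).toLinearMap ∘ₗ fhat f
  rw [injective_iff_map_eq_zero]
  intro x hx
  ext j
  simp only [Finsupp.coe_zero, Pi.zero_apply]
  obtain ⟨k, hk⟩ : ∃ k, (f (e j)) k ≠ 0 := by
    by_contra h; push_neg at h; exact hf j (Finsupp.ext h)
  have hval : g x (k, j) = x j * (f (e j)) k := by
    show ((finsuppTensorFinsupp' ℂ ℕ+ ℕ+).toLinearMap (fhat f x)) (k, j) = _
    rw [fhat, Finsupp.lsum_apply]
    rw [Finsupp.sum]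
    rw [map_sum (finsuppTensorFinsupp' ℂ ℕ+ ℕ+).toLinearMap]
    rw [Finsupp.finset_sum_apply]
    simp only [LinearMap.toSpanSingleton_apply, map_smul, LinearEquiv.coe_coe,
      LinearEquiv.coe_toLinearMap,
      finsuppTensorFinsupp'_apply_apply, Finsupp.smul_apply, smul_eq_mul]
    rw [Finset.sum_eq_single j
      (fun b _ hb => by
        rw [show (e b) j = 0 from by simp [e, Finsupp.single_apply, hb], mul_zero, mul_zero])
      (fun hj => by rw [Finsupp.notMem_support_iff.mp hj, zero_mul])]
    rw [show (e j) j = 1 from by simp [e], mul_one]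
  rw [hx] at hval
  simp only [Finsupp.coe_zero, Pi.zero_apply] at hval
  rcases mul_eq_zero.mp hval.symm with h | h
  · exact h
  · exact absurd h hk

/-- if f(e_i) ≠ 0 for all i, then β(f) = ν̃ ∘ f̂ is injective. -/
theorem beta_injective (f : (ℕ+ →₀ ℂ) →ₗ[ℂ] (ℕ+ →₀ ℂ))
    (hf : ∀ i : ℕ+, f (e i) ≠ 0) :
    Function.Injective ⇑(beta f) := by
  have hcoe : ⇑(beta f)
      = (Finsupp.mapDomain (fun p => nu p)) ∘ ⇑((finsuppTensorFinsupp' ℂ ℕ+ ℕ+).toLinearMap ∘ₗ fhat f) := rfl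
  rw [hcoe]
  exact (Finsupp.mapDomain_injective (fun a b hab => nu_injective hab)).comp
    (inner_injective f hf)
end
end

section
/- Let f : ⊕_{n ∈ ℕ₊} ℂ → ⊕_{m ∈ ℕ₊} ℂ be an injective linear map and β(f) = ν̃ ∘ f̂ as above. Then for every t ∈ [0,1), the linear map t·f + (1−t)·β(f) is injective. More generally, t·f + (1−t)·β(f) = (t·φ + (1−t)·ν̃) ∘ f̂, and t·φ + (1−t)·ν̃ is injective for t ≠ 1. -/
open scoped TensorProduct

noncomputable section

lemma nu_coe (p : ℕ+ × ℕ+) :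
    (nu p : ℕ) = ((p.1 : ℕ) + (p.2 : ℕ) - 1) * ((p.1 : ℕ) + (p.2 : ℕ) - 2) / 2 + (p.2 : ℕ) :=
  rfl

lemma two_mul_nu_coe (p : ℕ+ × ℕ+) :
    2 * (nu p : ℕ) =
      ((p.1 : ℕ) + (p.2 : ℕ) - 1) * ((p.1 : ℕ) + (p.2 : ℕ) - 2) + 2 * (p.2 : ℕ) := by
  have h1 : 0 < (p.1 : ℕ) := p.1.pos
  have h2 : 0 < (p.2 : ℕ) := p.2.pos
  have hd : 2 ∣ ((p.1 : ℕ) + (p.2 : ℕ) - 1) * ((p.1 : ℕ) + (p.2 : ℕ) - 2) := by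
    obtain ⟨a, ha⟩ : ∃ a, (p.1 : ℕ) + (p.2 : ℕ) = a + 2 := ⟨(p.1 : ℕ) + (p.2 : ℕ) - 2, by omega⟩
    rw [ha, show a + 2 - 1 = a + 1 by omega, show a + 2 - 2 = a by omega, Nat.mul_comm]
    exact (Nat.even_mul_succ_self a).two_dvd
  rw [nu_coe, Nat.mul_add, Nat.mul_div_cancel' hd]

lemma fst_le_nu (p : ℕ+ × ℕ+) : p.1 ≤ nu p := by
  rw [← PNat.coe_le_coe]
  have h2m := two_mul_nu_coe p
  have hi : 0 < (p.1 : ℕ) := p.1.pos; have hj : 0 < (p.2 : ℕ) := p.2.pos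
  obtain ⟨a, ha⟩ : ∃ a, (p.1 : ℕ) + (p.2 : ℕ) = a + 2 := ⟨(p.1 : ℕ) + (p.2 : ℕ) - 2, by omega⟩
  rw [ha, show a + 2 - 1 = a + 1 by omega, show a + 2 - 2 = a by omega] at h2m
  rcases Nat.lt_or_ge a 2 with hlt | hge
  · interval_cases a <;> omega
  · have hmul : 2 * a ≤ (a + 1) * a := Nat.mul_le_mul_right a (by omega)
    have : 2 * (p.1 : ℕ) ≤ 2 * (nu p : ℕ) := by
      rw [h2m]; nlinarith
    omega

lemma g_inj (t : ℂ) (ht : t ≠ 1) :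
    Function.Injective
      ⇑(t • Finsupp.lmapDomain ℂ ℂ (Prod.fst : ℕ+ × ℕ+ → ℕ+) +
        (1 - t) • Finsupp.lmapDomain ℂ ℂ nu) := by
  classical
  rw [← LinearMap.ker_eq_bot, LinearMap.ker_eq_bot']
  intro x hx
  by_contra hx0
  obtain ⟨p, hp, hmax⟩ := Finset.exists_max_image x.support nu (Finsupp.support_nonempty_iff.mpr hx0)
  set N := nu p with hN
  have hval : t * (Finsupp.mapDomain Prod.fst x) N + (1 - t) * (Finsupp.mapDomain nu x) N = 0 := by
    have h := DFunLike.congr_fun hx N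
    simpa [Finsupp.lmapDomain_apply, Finsupp.add_apply, Finsupp.smul_apply, smul_eq_mul]
      using h
  have hnu : (Finsupp.mapDomain nu x) N = x p := Finsupp.mapDomain_apply nu_injective x p
  have hfst : (Finsupp.mapDomain Prod.fst x) N = (Finsupp.single p.1 (x p)) N := by
    rw [Finsupp.mapDomain, Finsupp.sum_apply, Finsupp.sum]
    refine Finset.sum_eq_single_of_mem p hp ?_
    intro q hq hqp
    rw [Finsupp.single_apply, if_neg]
    intro hq1
    have h1 : nu q ≤ nu p := hmax q hq
    have h2 : nu p ≤ nu q := by rw [← hN, ← hq1]; exact fst_le_nu q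
    exact hqp (nu_injective (le_antisymm h1 h2))
  have hxp : x p ≠ 0 := Finsupp.mem_support_iff.mp hp
  rw [hnu, hfst, Finsupp.single_apply] at hval
  by_cases hpN : p.1 = N
  · rw [if_pos hpN] at hval
    exact absurd (by linear_combination hval) hxp
  · rw [if_neg hpN] at hval
    have h2 : (1 - t) * x p = 0 := by linear_combination hval
    exact absurd ((mul_eq_zero.mp h2).resolve_left (sub_ne_zero.mpr (Ne.symm ht))) hxp

lemma phiT_tmul_e (x : ℕ+ →₀ ℂ) (j : ℕ+) : phiT (x ⊗ₜ[ℂ] e j) = x := by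
  suffices h : (phiT ∘ₗ (TensorProduct.mk ℂ (ℕ+ →₀ ℂ) (ℕ+ →₀ ℂ)).flip (e j)) = LinearMap.id from
    DFunLike.congr_fun h x
  apply Finsupp.lhom_ext
  intro k c
  simp [phiT, e, finsuppTensorFinsupp'_single_tmul_single, Finsupp.mapDomain_single]

lemma phiT_fhat (f : (ℕ+ →₀ ℂ) →ₗ[ℂ] (ℕ+ →₀ ℂ)) : phiT ∘ₗ fhat f = f := by
  apply Finsupp.lhom_ext
  intro i c
  have h1 : fhat f (Finsupp.single i c) = c • (f (e i) ⊗ₜ[ℂ] e i) := by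
    rw [fhat, Finsupp.lsum_single]; rfl
  have h2 : Finsupp.single i c = c • e i := by
    rw [e, Finsupp.smul_single, smul_eq_mul, mul_one]
  rw [LinearMap.comp_apply, h1, map_smul, phiT_tmul_e, h2, map_smul]
/-- if f is injective, then t·f + (1−t)·β(f) is injective for
t ∈ [0,1); moreover t·f + (1−t)·β(f) = (t·φ + (1−t)·ν̃) ∘ f̂, and
t·φ + (1−t)·ν̃ is injective for all t ≠ 1. -/
theorem homotopy_injective (f : (ℕ+ →₀ ℂ) →ₗ[ℂ] (ℕ+ →₀ ℂ))
    (hf : Function.Injective ⇑f) :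
    (∀ t : ℝ, t ∈ Set.Ico (0 : ℝ) 1 →
      Function.Injective ⇑((t : ℂ) • f + (1 - (t : ℂ)) • beta f)) ∧
    (∀ t : ℂ, t • f + (1 - t) • beta f = (t • phiT + (1 - t) • nuT) ∘ₗ fhat f) ∧
    (∀ t : ℂ, t ≠ 1 → Function.Injective ⇑(t • phiT + (1 - t) • nuT)) := by
  have hfhat_comp : ∀ t : ℂ, t • f + (1 - t) • beta f = (t • phiT + (1 - t) • nuT) ∘ₗ fhat f := by
    intro t
    rw [LinearMap.add_comp, LinearMap.smul_comp, LinearMap.smul_comp, phiT_fhat]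
    rfl
  have hphi_inj : ∀ t : ℂ, t ≠ 1 → Function.Injective ⇑(t • phiT + (1 - t) • nuT) := by
    intro t ht
    have hc : t • phiT + (1 - t) • nuT =
        (t • Finsupp.lmapDomain ℂ ℂ (Prod.fst : ℕ+ × ℕ+ → ℕ+) +
          (1 - t) • Finsupp.lmapDomain ℂ ℂ nu) ∘ₗ (finsuppTensorFinsupp' ℂ ℕ+ ℕ+).toLinearMap := by
      rw [LinearMap.add_comp, LinearMap.smul_comp, LinearMap.smul_comp]; rfl
    rw [hc, LinearMap.coe_comp]
    exact (g_inj t ht).comp (finsuppTensorFinsupp' ℂ ℕ+ ℕ+).injective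
  have hfhat_inj : Function.Injective ⇑(fhat f) := by
    have h : Function.Injective (⇑phiT ∘ ⇑(fhat f)) := by
      rw [← LinearMap.coe_comp, phiT_fhat]; exact hf
    exact h.of_comp
  refine ⟨?_, hfhat_comp, hphi_inj⟩
  intro t ht
  rw [hfhat_comp, LinearMap.coe_comp]
  refine (hphi_inj _ ?_).comp hfhat_inj
  intro h
  rw [Complex.ofReal_eq_one] at h
  exact absurd (h ▸ ht.2) (lt_irrefl 1)
end
end

section
/- Let ν : ℕ₊ × ℕ₊ → ℕ₊ be the antidiagonal pairing bijection and suppose (a_{ij}) is a finitely supported family in ℂ such that each a_{ij} with (i,j) ∉ {(1,1),(2,1)} is a ℂ-linear combination of the values a_{ν(i,j),ℓ}, ℓ ∈ ℕ₊, and each of a_{11}, a_{21} is a linear combination of a_{1j}, a_{2j} with j ≥ 2 respectively. If the support of (a_{ij}) were nonempty, its lexicographically maximal element would lead to a contradiction; hence a_{ij} = 0 for all (i,j). -/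
open scoped TensorProduct

noncomputable section

lemma nu_gt' (i j : ℕ) (hi : 1 ≤ i) (hj : 1 ≤ j)
    (h1 : ¬(i = 1 ∧ j = 1)) (h2 : ¬(i = 2 ∧ j = 1)) :
    i < (i + j - 1) * (i + j - 2) / 2 + j := by
  rcases Nat.lt_or_ge j 2 with hj2 | hj2
  · have hj1 : j = 1 := by omega
    have hi3 : 3 ≤ i := by omega
    have key : 2 * i ≤ (i + j - 1) * (i + j - 2) := by
      have h3 : 3 * (i - 1) ≤ i * (i - 1) := Nat.mul_le_mul_right _ hi3
      have h' : (i + j - 1) * (i + j - 2) = i * (i - 1) := by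
        subst hj1; congr 1 <;> omega
      omega
    have := Nat.div_le_div_right (c := 2) key
    simp only [Nat.mul_div_cancel_left _ (by norm_num : 0 < 2)] at this
    omega
  · have key : 2 * (i + j - 2) ≤ (i + j - 1) * (i + j - 2) :=
      Nat.mul_le_mul_right _ (by omega)
    have := Nat.div_le_div_right (c := 2) key
    simp only [Nat.mul_div_cancel_left _ (by norm_num : 0 < 2)] at this
    omega

lemma nu_gt (p : ℕ+ × ℕ+) (h1 : p ≠ (1,1)) (h2 : p ≠ (2,1)) : p.1 < nu p := by
  have h1' : ¬((p.1 : ℕ) = 1 ∧ (p.2 : ℕ) = 1) := by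
    rintro ⟨ha, hb⟩
    exact h1 (Prod.ext (PNat.coe_injective (by simpa using ha))
      (PNat.coe_injective (by simpa using hb)))
  have h2' : ¬((p.1 : ℕ) = 2 ∧ (p.2 : ℕ) = 1) := by
    rintro ⟨ha, hb⟩
    exact h2 (Prod.ext (PNat.coe_injective (by simpa using ha))
      (PNat.coe_injective (by simpa using hb)))
  have := nu_gt' (p.1 : ℕ) (p.2 : ℕ) p.1.one_le p.2.one_le h1' h2'
  exact_mod_cast this

/-- if each a_{ij} (for (i,j) ∉ {(1,1),(2,1)}) is a linear
combination of the a_{ν(i,j),ℓ}, and a_{11}, a_{21} are linear combinations of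
the a_{1j}, a_{2j} with j ≥ 2 respectively, then a = 0. -/
theorem coeffs_vanish_abstract (a : ℕ+ × ℕ+ →₀ ℂ)
    (hrest : ∀ p : ℕ+ × ℕ+, p ≠ (1, 1) → p ≠ (2, 1) →
      ∃ c : ℕ+ →₀ ℂ, a p = c.sum fun ℓ coef => coef * a (nu p, ℓ))
    (h11 : ∃ c : ℕ+ →₀ ℂ, (∀ j : ℕ+, j < 2 → c j = 0) ∧
      a (1, 1) = c.sum fun j coef => coef * a (1, j))
    (h21 : ∃ c : ℕ+ →₀ ℂ, (∀ j : ℕ+, j < 2 → c j = 0) ∧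
      a (2, 1) = c.sum fun j coef => coef * a (2, j)) :
    a = 0 := by
  by_contra ha
  have hne : a.support.Nonempty := Finsupp.support_nonempty_iff.mpr ha
  set S := a.support with hS
  have hne1 : (S.image Prod.fst).Nonempty := hne.image _
  set i := (S.image Prod.fst).max' hne1 with hidef
  have hiS : ∃ q ∈ S, q.1 = i := by
    have := (S.image Prod.fst).max'_mem hne1
    simpa [Finset.mem_image] using this
  have hTne : ({q ∈ S | q.1 = i} : Finset (ℕ+ × ℕ+)).Nonempty := by
    obtain ⟨q, hq, hq1⟩ := hiS
    exact ⟨q, Finset.mem_filter.mpr ⟨hq, hq1⟩⟩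
  have hne2 : (({q ∈ S | q.1 = i} : Finset (ℕ+ × ℕ+)).image Prod.snd).Nonempty := hTne.image _
  set j := (({q ∈ S | q.1 = i} : Finset (ℕ+ × ℕ+)).image Prod.snd).max' hne2 with hjdef
  have hp0 : (i, j) ∈ S := by
    have := (({q ∈ S | q.1 = i} : Finset (ℕ+ × ℕ+)).image Prod.snd).max'_mem hne2
    rw [Finset.mem_image] at this
    obtain ⟨q, hq, hq2⟩ := this
    obtain ⟨hqS, hq1⟩ := Finset.mem_filter.mp hq
    rw [← hjdef] at hq2
    have hq' : q = (i, j) := Prod.ext hq1 hq2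
    rwa [← hq']
  have hmax1 : ∀ q ∈ S, q.1 ≤ i := fun q hq =>
    Finset.le_max' _ _ (Finset.mem_image_of_mem _ hq)
  have hmax2 : ∀ q ∈ S, q.1 = i → q.2 ≤ j := fun q hq h1 =>
    Finset.le_max' _ _ (Finset.mem_image_of_mem _ (Finset.mem_filter.mpr ⟨hq, h1⟩))
  have hzero : ∀ q : ℕ+ × ℕ+, i < q.1 → a q = 0 := by
    intro q h
    by_contra h0
    exact absurd (hmax1 q (Finsupp.mem_support_iff.mpr h0)) (not_le.mpr h)
  have hzero2 : ∀ q : ℕ+ × ℕ+, q.1 = i → j < q.2 → a q = 0 := by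
    intro q h1 h2
    by_contra h0
    exact absurd (hmax2 q (Finsupp.mem_support_iff.mpr h0) h1) (not_le.mpr h2)
  have hane : a (i, j) ≠ 0 := Finsupp.mem_support_iff.mp hp0
  by_cases hc1 : ((i, j) : ℕ+ × ℕ+) = (1, 1)
  · obtain ⟨hi1, hj1⟩ := Prod.mk.injEq .. ▸ hc1
    obtain ⟨c, hc0, hsum⟩ := h11
    apply hane
    rw [hc1, hsum]
    apply Finset.sum_eq_zero
    intro ℓ hℓ
    show c ℓ * a (1, ℓ) = 0
    rcases lt_or_ge ℓ 2 with hl | hl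
    · rw [hc0 ℓ hl, zero_mul]
    · rw [hzero2 (1, ℓ) hi1.symm (by show j < ℓ; rw [hj1]; exact lt_of_lt_of_le (by decide) hl),
        mul_zero]
  · by_cases hc2 : ((i, j) : ℕ+ × ℕ+) = (2, 1)
    · obtain ⟨hi1, hj1⟩ := Prod.mk.injEq .. ▸ hc2
      obtain ⟨c, hc0, hsum⟩ := h21
      apply hane
      rw [hc2, hsum]
      apply Finset.sum_eq_zero
      intro ℓ hℓ
      show c ℓ * a (2, ℓ) = 0
      rcases lt_or_ge ℓ 2 with hl | hl
      · rw [hc0 ℓ hl, zero_mul]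
      · rw [hzero2 (2, ℓ) hi1.symm (by show j < ℓ; rw [hj1]; exact lt_of_lt_of_le (by decide) hl),
          mul_zero]
    · obtain ⟨c, hsum⟩ := hrest (i, j) hc1 hc2
      apply hane
      rw [hsum]
      apply Finset.sum_eq_zero
      intro ℓ hℓ
      show c ℓ * a (nu (i, j), ℓ) = 0
      rw [hzero (nu (i, j), ℓ) (nu_gt (i, j) hc1 hc2), mul_zero]
end
end
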